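/- arXiv:1805.06967 — 3 statements merged into one kernel-verified Lean document; each statement's English description precedes it below -/
import Mathlib

section
/- Let p ≥ 2 be a real number and let n ≥ 1. For all vectors c, d in ℝⁿ (with the convention that ‖x‖^{p-2}x denotes the zero vector when x = 0), the inner product ⟨‖c‖^{p-2}c − ‖d‖^{p-2}d, c − d⟩ is at least (4/p²)·‖ ‖c‖^{(p-2)/2}c − ‖d‖^{(p-2)/2}d ‖². -/
/-! For fixed norms `a = ‖c‖`, `b = ‖d‖` both sides are affine in `t = ⟪c, d⟫`, which ranges over
`[-ab, ab]` by Cauchy–Schwarz, so it suffices to check the two collinear configurations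
`t = ±ab`. Writing `α = a^{(p-2)/2}`, `β = b^{(p-2)/2}`, the case `t = -ab` reduces to
`(αa + βb)² ≤ (α²a + β²b)(a + b)`, whose defect is `ab(α - β)²`, together with `4/p² ≤ 1`.
The case `t = ab` is the one-dimensional inequality, which follows from the tangent-line bound
`a^{p/2} - b^{p/2} ≤ (p/2) a^{p/2-1}(a - b)` of the convex function `x ↦ x^{p/2}`. -/

open Real

lemma add_mul_nonneg_of_abs_le {C D s t : ℝ} (hs : 0 ≤ C + D * s) (hs' : 0 ≤ C - D * s)
    (ht : |t| ≤ s) : 0 ≤ C + D * t := by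
  have hD : |D| * s ≤ C := by
    rcases abs_cases D with ⟨h, -⟩ | ⟨h, -⟩ <;> rw [h] <;> linarith
  have hDt : |D * t| ≤ |D| * s := by
    rw [abs_mul]; exact mul_le_mul_of_nonneg_left ht (abs_nonneg D)
  linarith [neg_abs_le (D * t)]

lemma rpow_sub_rpow_le_mul_rpow_sub_one_mul_sub {r a b : ℝ} (hr : 1 ≤ r) (hb : 0 ≤ b)
    (hba : b ≤ a) : a ^ r - b ^ r ≤ r * a ^ (r - 1) * (a - b) := by
  rcases hba.eq_or_lt with rfl | hlt
  · simp
  have h := (convexOn_rpow hr).slope_le_of_hasDerivAt hb (hb.trans hlt.le) hlt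
    (hasDerivAt_rpow_const (Or.inr hr))
  rwa [slope_def_field, div_le_iff₀ (sub_pos.2 hlt)] at h

lemma four_div_sq_mul_rpow_mul_self_sub_sq_le {p a b : ℝ} (hp : 2 ≤ p) (ha : 0 ≤ a)
    (hb : 0 ≤ b) :
    4 / p ^ 2 * (a ^ ((p - 2) / 2) * a - b ^ ((p - 2) / 2) * b) ^ 2 ≤
      ((a ^ ((p - 2) / 2)) ^ 2 * a - (b ^ ((p - 2) / 2)) ^ 2 * b) * (a - b) := by
  wlog hba : b ≤ a generalizing a b
  · convert this hb ha (le_of_not_ge hba) using 1 <;> ring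
  set α := a ^ ((p - 2) / 2)
  set β := b ^ ((p - 2) / 2)
  have hα : 0 ≤ α := rpow_nonneg ha _
  have hβα : β ≤ α := rpow_le_rpow hb hba (by linarith)
  have hmul_self : ∀ x : ℝ, 0 ≤ x → x ^ ((p - 2) / 2) * x = x ^ (p / 2) := fun x hx => by
    rw [← rpow_add_one' hx (by linarith : (p - 2) / 2 + 1 ≠ 0)]; ring_nf
  have htangent : α * a - β * b ≤ p / 2 * α * (a - b) := by
    have h := rpow_sub_rpow_le_mul_rpow_sub_one_mul_sub (r := p / 2) (by linarith) hb hba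
    rwa [← hmul_self a ha, ← hmul_self b hb, show p / 2 - 1 = (p - 2) / 2 by ring] at h
  have hlhs : 0 ≤ α * a - β * b := sub_nonneg.2 (mul_le_mul hβα hba hb hα)
  calc 4 / p ^ 2 * (α * a - β * b) ^ 2 ≤ 4 / p ^ 2 * (p / 2 * α * (a - b)) ^ 2 := by gcongr
    _ = α ^ 2 * (a - b) * (a - b) := by field_simp; ring
    _ ≤ (α ^ 2 * a - β ^ 2 * b) * (a - b) := by
      have hβα_sq : β ^ 2 * b ≤ α ^ 2 * b := by gcongr
      gcongr; linarith

theorem four_div_sq_mul_norm_rpow_smul_sub_sq_le_inner {E : Type*} [NormedAddCommGroup E]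
    [InnerProductSpace ℝ E] {p : ℝ} (hp : 2 ≤ p) (c d : E) :
    4 / p ^ 2 * ‖‖c‖ ^ ((p - 2) / 2) • c - ‖d‖ ^ ((p - 2) / 2) • d‖ ^ 2 ≤
      inner ℝ (‖c‖ ^ (p - 2) • c - ‖d‖ ^ (p - 2) • d) (c - d) := by
  have hsq : ∀ x : ℝ, 0 ≤ x → x ^ (p - 2) = (x ^ ((p - 2) / 2)) ^ 2 := fun x hx => by
    rw [← rpow_mul_natCast hx]; ring_nf
  rw [hsq _ (norm_nonneg c), hsq _ (norm_nonneg d)]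
  set a := ‖c‖
  set b := ‖d‖
  set α := a ^ ((p - 2) / 2)
  set β := b ^ ((p - 2) / 2)
  set t := inner ℝ c d with ht
  have hlhs : ‖α • c - β • d‖ ^ 2 = α ^ 2 * a ^ 2 + β ^ 2 * b ^ 2 - 2 * α * β * t := by
    rw [norm_sub_sq_real, norm_smul, norm_smul, real_inner_smul_left, real_inner_smul_right,
      Real.norm_of_nonneg (rpow_nonneg (norm_nonneg c) _),
      Real.norm_of_nonneg (rpow_nonneg (norm_nonneg d) _)]
    ring
  have hrhs : inner ℝ (α ^ 2 • c - β ^ 2 • d) (c - d) =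
      α ^ 2 * a ^ 2 + β ^ 2 * b ^ 2 - (α ^ 2 + β ^ 2) * t := by
    simp only [inner_sub_left, inner_sub_right, real_inner_smul_left, real_inner_self_eq_norm_sq,
      real_inner_comm c d, ← ht]
    ring
  have hsame := four_div_sq_mul_rpow_mul_self_sub_sq_le hp (norm_nonneg c) (norm_nonneg d)
  have hopposite : 4 / p ^ 2 * (α * a + β * b) ^ 2 ≤ (α ^ 2 * a + β ^ 2 * b) * (a + b) := by
    have hcoef : 4 / p ^ 2 ≤ 1 := by rw [div_le_one (by positivity)]; nlinarith
    nlinarith [mul_nonneg (mul_nonneg (norm_nonneg c) (norm_nonneg d)) (sq_nonneg (α - β)),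
      mul_le_mul_of_nonneg_right hcoef (sq_nonneg (α * a + β * b))]
  have := add_mul_nonneg_of_abs_le
    (C := (1 - 4 / p ^ 2) * (α ^ 2 * a ^ 2 + β ^ 2 * b ^ 2))
    (D := 4 / p ^ 2 * (2 * α * β) - (α ^ 2 + β ^ 2))
    (by linear_combination hsame) (by linear_combination hopposite)
    (abs_real_inner_le_norm c d)
  rw [hlhs, hrhs]
  linear_combination this

theorem lindqvist_ineq_of_two_le_general
    (p : ℝ) (hp : 2 ≤ p) (n : ℕ)
    (c d : EuclideanSpace ℝ (Fin n)) :
    (4 / p ^ 2) * ‖(‖c‖ ^ ((p - 2) / 2)) • c - (‖d‖ ^ ((p - 2) / 2)) • d‖ ^ 2 ≤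
      (inner ℝ ((‖c‖ ^ (p - 2)) • c - (‖d‖ ^ (p - 2)) • d) (c - d) : ℝ) :=
  four_div_sq_mul_norm_rpow_smul_sub_sq_le_inner hp c d

/-- Lindqvist's first algebraic vector inequality: for `p ≥ 2` and vectors `c, d` in `ℝⁿ`
(with `‖x‖^{p-2} x` understood as `0` when `x = 0`, which is automatic here since the
scalar multiplies the zero vector),
`⟨‖c‖^{p-2}c − ‖d‖^{p-2}d, c − d⟩ ≥ (4/p²) ‖ ‖c‖^{(p-2)/2}c − ‖d‖^{(p-2)/2}d ‖²`. -/
theorem lindqvist_ineq_of_two_le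
    (p : ℝ) (hp : 2 ≤ p) (n : ℕ) (hn : 1 ≤ n)
    (c d : EuclideanSpace ℝ (Fin n)) :
    (4 / p ^ 2) * ‖(‖c‖ ^ ((p - 2) / 2)) • c - (‖d‖ ^ ((p - 2) / 2)) • d‖ ^ 2 ≤
      (inner ℝ ((‖c‖ ^ (p - 2)) • c - (‖d‖ ^ (p - 2)) • d) (c - d) : ℝ) :=
  lindqvist_ineq_of_two_le_general p hp n c d
end

section
/- Let 1 < p ≤ 2 and let n ≥ 1. For all vectors c, d in ℝⁿ (with the convention that ‖x‖^{p-2}x denotes the zero vector when x = 0), the inner product ⟨‖c‖^{p-2}c − ‖d‖^{p-2}d, c − d⟩ is at least (p−1)·‖c − d‖²·(1 + ‖c‖² + ‖d‖²)^{(p-2)/2}. -/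
/-!
Write `a = ‖c‖`, `b = ‖d‖`, `t = ⟪c, d⟫` and `M = (1 + a² + b²)^((p-2)/2)`. Both sides of the
inequality depend on `c, d` only through `a, b, t`, and their difference is affine in `t`, which
ranges over `[-ab, ab]`; so it suffices to check the two endpoints, i.e. parallel and antiparallel
vectors. For `t = ab` the claim is `(p-1)(a-b)² M ≤ (a-b)(a^{p-1} - b^{p-1})`, which follows from
concavity of `x ↦ x^{p-1}` and `M ≤ max(a, b)^{p-2}`. For `t = -ab` it follows from
`a M ≤ a^{p-1}`, `b M ≤ b^{p-1}` and `p - 1 ≤ 1`.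
-/

lemma rpow_div_two_le_rpow_of_sq_le {r s x : ℝ} (hr : r ≤ 0) (hx : 0 < x) (hxs : x ^ 2 ≤ s) :
    s ^ (r / 2) ≤ x ^ r := by
  have hsq : x ^ r = (x ^ 2) ^ (r / 2) := by
    rw [← Real.rpow_natCast_mul hx.le]
    push_cast
    ring_nf
  rw [hsq]
  exact Real.rpow_le_rpow_of_nonpos (by positivity) hxs (by linarith)

lemma mul_rpow_div_two_le_rpow_mul_self {r s x : ℝ} (hr : r ≤ 0) (hx : 0 ≤ x)
    (hxs : x ^ 2 ≤ s) : x * s ^ (r / 2) ≤ x ^ r * x := by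
  rcases hx.eq_or_lt with rfl | hx
  · simp
  · rw [mul_comm]
    exact mul_le_mul_of_nonneg_right (rpow_div_two_le_rpow_of_sq_le hr hx hxs) hx.le

/-- Concavity of `x ↦ x ^ q` for `0 ≤ q ≤ 1`: the graph lies below its tangent at `a`. -/
lemma rpow_le_rpow_add_mul_sub_of_le_one {q a b : ℝ} (hq0 : 0 ≤ q) (hq1 : q ≤ 1) (ha : 0 < a)
    (hb : 0 ≤ b) : b ^ q ≤ a ^ q + q * a ^ (q - 1) * (b - a) := by
  have hbern := rpow_one_add_le_one_add_mul_self (s := b / a - 1)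
    (by linarith [div_nonneg hb ha.le]) hq0 hq1
  rw [add_sub_cancel, Real.div_rpow hb ha.le, div_le_iff₀ (by positivity)] at hbern
  calc b ^ q ≤ (1 + q * (b / a - 1)) * a ^ q := hbern
    _ = a ^ q + q * (a ^ q / a) * (b - a) := by field_simp
    _ = a ^ q + q * a ^ (q - 1) * (b - a) := by rw [Real.rpow_sub_one ha.ne']

lemma rpow_sub_two_mul_self {p x : ℝ} (hp : 1 < p) (hx : 0 ≤ x) :
    x ^ (p - 2) * x = x ^ (p - 1) := by
  rw [← Real.rpow_add_one' hx (by linarith)]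
  ring_nf

section Lindqvist

variable {p a b : ℝ}

lemma lindqvist_aligned_of_lt {M : ℝ} (hp1 : 1 < p) (hp2 : p ≤ 2) (hb : 0 ≤ b) (hba : b < a)
    (hM : M ≤ a ^ (p - 2)) : (p - 1) * (a - b) ^ 2 * M ≤ (a - b) * (a ^ (p - 1) - b ^ (p - 1)) := by
  have hab : 0 < a - b := sub_pos.mpr hba
  have htangent := rpow_le_rpow_add_mul_sub_of_le_one (q := p - 1) (by linarith) (by linarith)
    (hb.trans_lt hba) hb
  rw [show p - 1 - 1 = p - 2 by ring] at htangent
  calc (p - 1) * (a - b) ^ 2 * M ≤ (p - 1) * (a - b) ^ 2 * a ^ (p - 2) :=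
        mul_le_mul_of_nonneg_left hM (by positivity)
    _ ≤ (a - b) * (a ^ (p - 1) - b ^ (p - 1)) := by nlinarith

lemma lindqvist_aligned (hp1 : 1 < p) (hp2 : p ≤ 2) (ha : 0 ≤ a) (hb : 0 ≤ b) :
    (p - 1) * (a - b) ^ 2 * (1 + a ^ 2 + b ^ 2) ^ ((p - 2) / 2) ≤
      (a - b) * (a ^ (p - 1) - b ^ (p - 1)) := by
  have hr : p - 2 ≤ 0 := by linarith
  rcases lt_trichotomy b a with hba | rfl | hab
  · exact lindqvist_aligned_of_lt hp1 hp2 hb hba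
      (rpow_div_two_le_rpow_of_sq_le hr (hb.trans_lt hba) (by nlinarith))
  · simp
  · have := lindqvist_aligned_of_lt hp1 hp2 ha hab
      (rpow_div_two_le_rpow_of_sq_le (s := 1 + a ^ 2 + b ^ 2) hr (ha.trans_lt hab) (by nlinarith))
    linear_combination this

lemma lindqvist_opposed (hp2 : p ≤ 2) (ha : 0 ≤ a) (hb : 0 ≤ b) :
    (p - 1) * (a + b) ^ 2 * (1 + a ^ 2 + b ^ 2) ^ ((p - 2) / 2) ≤
      (a + b) * (a ^ (p - 2) * a + b ^ (p - 2) * b) := by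
  have hr : p - 2 ≤ 0 := by linarith
  set M := (1 + a ^ 2 + b ^ 2) ^ ((p - 2) / 2)
  have hM : 0 ≤ M := by positivity
  have haM : a * M ≤ a ^ (p - 2) * a := mul_rpow_div_two_le_rpow_mul_self hr ha (by nlinarith)
  have hbM : b * M ≤ b ^ (p - 2) * b := mul_rpow_div_two_le_rpow_mul_self hr hb (by nlinarith)
  calc (p - 1) * (a + b) ^ 2 * M
      ≤ (a + b) * (a * M + b * M) := by
        nlinarith [mul_nonneg (mul_nonneg (sq_nonneg (a + b)) hM) (by linarith : 0 ≤ 2 - p)]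
    _ ≤ (a + b) * (a ^ (p - 2) * a + b ^ (p - 2) * b) := by gcongr

lemma add_mul_nonneg_of_le_of_le {α β u v t : ℝ} (hut : u ≤ t) (htv : t ≤ v)
    (hu : 0 ≤ α + β * u) (hv : 0 ≤ α + β * v) : 0 ≤ α + β * t := by
  rcases le_total 0 β with hβ | hβ <;> nlinarith

lemma lindqvist_scalar (hp1 : 1 < p) (hp2 : p ≤ 2) (ha : 0 ≤ a) (hb : 0 ≤ b) {t : ℝ}
    (ht : |t| ≤ a * b) :
    (p - 1) * (a ^ 2 - 2 * t + b ^ 2) * (1 + a ^ 2 + b ^ 2) ^ ((p - 2) / 2) ≤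
      a ^ (p - 2) * a ^ 2 + b ^ (p - 2) * b ^ 2 - (a ^ (p - 2) + b ^ (p - 2)) * t := by
  set M := (1 + a ^ 2 + b ^ 2) ^ ((p - 2) / 2)
  have haligned := lindqvist_aligned hp1 hp2 ha hb
  rw [← rpow_sub_two_mul_self hp1 ha, ← rpow_sub_two_mul_self hp1 hb] at haligned
  have hopposed := lindqvist_opposed hp2 ha hb
  obtain ⟨htl, htu⟩ := abs_le.mp ht
  have := add_mul_nonneg_of_le_of_le htl htu
    (α := a ^ (p - 2) * a ^ 2 + b ^ (p - 2) * b ^ 2 - (p - 1) * (a ^ 2 + b ^ 2) * M)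
    (β := 2 * (p - 1) * M - a ^ (p - 2) - b ^ (p - 2))
    (by linear_combination hopposed) (by linear_combination haligned)
  linear_combination this

theorem lindqvist_inner {E : Type*} [NormedAddCommGroup E] [InnerProductSpace ℝ E]
    (hp1 : 1 < p) (hp2 : p ≤ 2) (c d : E) :
    (p - 1) * ‖c - d‖ ^ 2 * (1 + ‖c‖ ^ 2 + ‖d‖ ^ 2) ^ ((p - 2) / 2) ≤
      inner ℝ ((‖c‖ ^ (p - 2)) • c - (‖d‖ ^ (p - 2)) • d) (c - d) := by
  have hinner : inner ℝ ((‖c‖ ^ (p - 2)) • c - (‖d‖ ^ (p - 2)) • d) (c - d) =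
      ‖c‖ ^ (p - 2) * ‖c‖ ^ 2 + ‖d‖ ^ (p - 2) * ‖d‖ ^ 2
        - (‖c‖ ^ (p - 2) + ‖d‖ ^ (p - 2)) * inner ℝ c d := by
    simp only [inner_sub_left, inner_sub_right, real_inner_smul_left,
      real_inner_self_eq_norm_sq, real_inner_comm d c]
    ring
  rw [hinner, norm_sub_sq_real]
  exact lindqvist_scalar hp1 hp2 (norm_nonneg c) (norm_nonneg d) (abs_real_inner_le_norm c d)

end Lindqvist

theorem lindqvist_ineq_of_le_two_general
    (p : ℝ) (hp1 : 1 < p) (hp2 : p ≤ 2) (n : ℕ)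
    (c d : EuclideanSpace ℝ (Fin n)) :
    (p - 1) * ‖c - d‖ ^ 2 * (1 + ‖c‖ ^ 2 + ‖d‖ ^ 2) ^ ((p - 2) / 2) ≤
      (inner ℝ ((‖c‖ ^ (p - 2)) • c - (‖d‖ ^ (p - 2)) • d) (c - d) : ℝ) :=
  lindqvist_inner hp1 hp2 c d

/-- Lindqvist's second algebraic vector inequality: for `1 < p ≤ 2` and vectors `c, d` in `ℝⁿ`
(with `‖x‖^{p-2} x` understood as `0` when `x = 0`, which is automatic here since
`0 ^ (p-2) = 0` for `p < 2` in `Real.rpow` and the scalar multiplies the zero vector for `p = 2`),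
`⟨‖c‖^{p-2}c − ‖d‖^{p-2}d, c − d⟩ ≥ (p−1) ‖c − d‖² (1 + ‖c‖² + ‖d‖²)^{(p-2)/2}`. -/
theorem lindqvist_ineq_of_le_two
    (p : ℝ) (hp1 : 1 < p) (hp2 : p ≤ 2) (n : ℕ) (hn : 1 ≤ n)
    (c d : EuclideanSpace ℝ (Fin n)) :
    (p - 1) * ‖c - d‖ ^ 2 * (1 + ‖c‖ ^ 2 + ‖d‖ ^ 2) ^ ((p - 2) / 2) ≤
      (inner ℝ ((‖c‖ ^ (p - 2)) • c - (‖d‖ ^ (p - 2)) • d) (c - d) : ℝ) :=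
  lindqvist_ineq_of_le_two_general p hp1 hp2 n c d
end

section
/- Let p, q, β, ε, r′, N₁ be real numbers with 1 < p < q < β + 1, 0 < ε < 1, r′ ≥ 0, and N₁ ≥ 1. Set σ = 1/((q−p)(r′+1)), A = (p−1)σ^{p} + ((N₁−1)/ε) σ^{p−1}, and L = max{ (2e)^{1/(β+1−q)}, (2A)^{1/(β+1−p)} }. Then A + L^{q−p} e^{(q−p)σ(r′+1)} ≤ L^{β+1−p}. -/
/-! Each of the two terms of `L` dominates one summand: `L^{β+1-p} ≥ 2A` from the second, and
`L^{β+1-q} ≥ 2e` from the first, which after multiplying by `L^{q-p}` bounds the second summand,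
since `σ` is chosen so that the exponential factor is exactly `e`. -/

open Real

lemma le_rpow_of_rpow_inv_le {a L c : ℝ} (hc : 0 < c) (hL : 0 ≤ L) (h : a ^ c⁻¹ ≤ L) :
    a ≤ L ^ c := by
  rcases le_or_gt a 0 with ha | ha
  · exact ha.trans (rpow_nonneg hL c)
  · exact (rpow_inv_le_iff_of_pos ha.le hL hc).mp h

theorem barrier_ineq_q_gt_p_general (p q β ε r' N₁ : ℝ)
    (hpq : p < q) (hq : q < β + 1) (hr' : 0 ≤ r') :
    let σ : ℝ := 1 / ((q - p) * (r' + 1))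
    let A : ℝ := (p - 1) * σ ^ p + ((N₁ - 1) / ε) * σ ^ (p - 1)
    let L : ℝ := max ((2 * Real.exp 1) ^ (1 / (β + 1 - q))) ((2 * A) ^ (1 / (β + 1 - p)))
    A + L ^ (q - p) * Real.exp ((q - p) * σ * (r' + 1)) ≤ L ^ (β + 1 - p) := by
  intro σ A L
  have hL : 0 < L := lt_max_of_lt_left (by positivity)
  have h2e : 2 * exp 1 ≤ L ^ (β + 1 - q) :=
    le_rpow_of_rpow_inv_le (by linarith) hL.le (by rw [← one_div]; exact le_max_left _ _)
  have h2A : 2 * A ≤ L ^ (β + 1 - p) :=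
    le_rpow_of_rpow_inv_le (by linarith) hL.le (by rw [← one_div]; exact le_max_right _ _)
  have hσ : (q - p) * σ * (r' + 1) = 1 := by
    have hqp : q - p ≠ 0 := by linarith
    have hr : r' + 1 ≠ 0 := by linarith
    simp only [σ]
    field_simp
  have hsplit : L ^ (q - p) * L ^ (β + 1 - q) = L ^ (β + 1 - p) := by
    rw [← rpow_add hL]; ring_nf
  have he : L ^ (q - p) * (2 * exp 1) ≤ L ^ (β + 1 - p) :=
    hsplit ▸ mul_le_mul_of_nonneg_left h2e (rpow_nonneg hL.le _)
  rw [hσ]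
  linarith

/-- The elementary inequality behind the barrier construction in the case `q > p`:
with `σ = 1/((q−p)(r′+1))`, `A = (p−1)σᵖ + ((N₁−1)/ε)σ^{p−1}`, and
`L = max{(2e)^{1/(β+1−q)}, (2A)^{1/(β+1−p)}}`, one has
`A + L^{q−p} e^{(q−p)σ(r′+1)} ≤ L^{β+1−p}`. -/
theorem barrier_ineq_q_gt_p (p q β ε r' N₁ : ℝ)
    (hp : 1 < p) (hpq : p < q) (hq : q < β + 1)
    (hε0 : 0 < ε) (hε1 : ε < 1) (hr' : 0 ≤ r') (hN₁ : 1 ≤ N₁) :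
    let σ : ℝ := 1 / ((q - p) * (r' + 1))
    let A : ℝ := (p - 1) * σ ^ p + ((N₁ - 1) / ε) * σ ^ (p - 1)
    let L : ℝ := max ((2 * Real.exp 1) ^ (1 / (β + 1 - q))) ((2 * A) ^ (1 / (β + 1 - p)))
    A + L ^ (q - p) * Real.exp ((q - p) * σ * (r' + 1)) ≤ L ^ (β + 1 - p) :=
  barrier_ineq_q_gt_p_general p q β ε r' N₁ hpq hq hr'
end
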